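/- arXiv:1707.06482 — 10 statements merged into one kernel-verified Lean document; each statement's English description precedes it below -/
import Mathlib

section
/- Let G be a graph in which no induced subgraph is isomorphic to the complete bipartite graph K_{s,t} (with parts of sizes s and t). Let G_Δ be the spanning subgraph of G whose edges are exactly those edges of G contained in some triangle of G. Then the graph G \ G_Δ obtained by deleting the edges of G_Δ from G contains no subgraph (not necessarily induced) isomorphic to K_{s,t}. -/
/-- `G` contains a (not necessarily induced) copy of the complete bipartite graph `K_{s,t}`. -/
def hasKst {V : Type*} (G : SimpleGraph V) (s t : ℕ) : Prop :=
  ∃ A B : Finset V, Disjoint A B ∧ A.card = s ∧ B.card = t ∧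
    ∀ a ∈ A, ∀ b ∈ B, G.Adj a b

/-- `G` contains an induced copy of `K_{s,t}`. -/
def hasInducedKst {V : Type*} (G : SimpleGraph V) (s t : ℕ) : Prop :=
  ∃ A B : Finset V, Disjoint A B ∧ A.card = s ∧ B.card = t ∧
    (∀ a ∈ A, ∀ b ∈ B, G.Adj a b) ∧
    (∀ a ∈ A, ∀ a' ∈ A, ¬ G.Adj a a') ∧
    (∀ b ∈ B, ∀ b' ∈ B, ¬ G.Adj b b')

/-- `G` contains a cycle of length `m`. -/
def hasCycleLength {V : Type*} (G : SimpleGraph V) (m : ℕ) : Prop :=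
  ∃ (v : V) (w : G.Walk v v), w.IsCycle ∧ w.length = m

open SimpleGraph

section

variable {V : Type*} {G : SimpleGraph V}

lemma adj_sdiff_triangleEdges {a b : V}
    (h : (G \ fromRel (fun a b => G.Adj a b ∧ ∃ c, G.Adj a c ∧ G.Adj b c)).Adj a b) :
    G.Adj a b ∧ ∀ c, G.Adj a c → ¬ G.Adj b c := by
  obtain ⟨hab, hnot⟩ := h
  exact ⟨hab, fun c hac hbc => hnot ⟨hab.ne, Or.inl ⟨hab, c, hac, hbc⟩⟩⟩

/-- An edge inside one side, with any vertex of the other side, would form a triangle through an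
edge of `H`. -/
lemma hasInducedKst_of_hasKst_of_edges_triangleFree {H : SimpleGraph V} {s t : ℕ}
    (hH : ∀ a b, H.Adj a b → G.Adj a b ∧ ∀ c, G.Adj a c → ¬ G.Adj b c)
    (hs : 0 < s) (ht : 0 < t) (h : hasKst H s t) : hasInducedKst G s t := by
  obtain ⟨A, B, hAB, hA, hB, hadj⟩ := h
  obtain ⟨a₀, ha₀⟩ := Finset.card_pos.mp (hA ▸ hs)
  obtain ⟨b₀, hb₀⟩ := Finset.card_pos.mp (hB ▸ ht)
  have hGadj : ∀ a ∈ A, ∀ b ∈ B, G.Adj a b := fun a ha b hb => (hH a b (hadj a ha b hb)).1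
  refine ⟨A, B, hAB, hA, hB, hGadj, ?_, ?_⟩
  · intro a ha a' ha' haa'
    exact (hH a b₀ (hadj a ha b₀ hb₀)).2 a' haa' (hGadj a' ha' b₀ hb₀).symm
  · intro b hb b' hb' hbb'
    exact (hH b a₀ (hadj a₀ ha₀ b hb).symm).2 b' hbb' (hGadj a₀ ha₀ b' hb')

end

theorem stmt_0_general {V : Type*} (G : SimpleGraph V) (s t : ℕ)
    (hs : 2 ≤ s) (ht : 2 ≤ t) (hG : ¬ hasInducedKst G s t) :
    ¬ hasKst (G \ SimpleGraph.fromRel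
      (fun a b => G.Adj a b ∧ ∃ c, G.Adj a c ∧ G.Adj b c)) s t := fun h =>
  hG (hasInducedKst_of_hasKst_of_edges_triangleFree (fun _ _ => adj_sdiff_triangleEdges)
    (by omega) (by omega) h)

/-- Deleting all edges of `G` lying in a triangle from a graph with no induced `K_{s,t}`
yields a `K_{s,t}`-free graph. -/
theorem stmt_0 {V : Type*} [Fintype V] (G : SimpleGraph V) (s t : ℕ)
    (hs : 2 ≤ s) (ht : 2 ≤ t) (hG : ¬ hasInducedKst G s t) :
    ¬ hasKst (G \ SimpleGraph.fromRel
      (fun a b => G.Adj a b ∧ ∃ c, G.Adj a c ∧ G.Adj b c)) s t :=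
  stmt_0_general G s t hs ht hG
end

section
/- Let k ≥ 2 and let G be a graph containing no cycle of length 5 and no induced copy of K_{2,t} for some t ≥ 2. Then any two non-adjacent vertices u, v of G have at most max(3,t) - 1 common neighbors. -/
/-! If two common neighbours `a, b` of `u` and `v` are adjacent, any third common neighbour `c`
closes the 5-cycle `u a b v c`. Otherwise the common neighbourhood is independent, and `u`, `v`
together with any `t` common neighbours induce a `K_{2,t}`. -/

namespace SimpleGraph

variable {V : Type*} (G : SimpleGraph V)

lemma hasCycleLength_five_of_adj {v₀ v₁ v₂ v₃ v₄ : V} (h₀₁ : G.Adj v₀ v₁) (h₁₂ : G.Adj v₁ v₂)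
    (h₂₃ : G.Adj v₂ v₃) (h₃₄ : G.Adj v₃ v₄) (h₄₀ : G.Adj v₄ v₀)
    (hnodup : [v₀, v₁, v₂, v₃, v₄].Nodup) : hasCycleLength G 5 := by
  refine ⟨v₀, .cons h₀₁ (.cons h₁₂ (.cons h₂₃ (.cons h₃₄ (.cons h₄₀ .nil)))), ?_, rfl⟩
  rw [Walk.isCycle_iff_isPath_tail_and_le_length]
  simp_all [Walk.isPath_def, eq_comm]

lemma hasCycleLength_five_of_adj_commonNeighbors {u v a b c : V} (huv : u ≠ v)
    (ha : a ∈ G.commonNeighbors u v) (hb : b ∈ G.commonNeighbors u v)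
    (hc : c ∈ G.commonNeighbors u v) (hab : G.Adj a b) (hca : c ≠ a) (hcb : c ≠ b) :
    hasCycleLength G 5 := by
  rw [mem_commonNeighbors] at ha hb hc
  refine G.hasCycleLength_five_of_adj ha.1 hab hb.2.symm hc.2 hc.1.symm ?_
  simp only [List.nodup_cons, List.mem_cons, List.not_mem_nil, List.nodup_nil, or_false, not_or,
    not_false_eq_true, and_true]
  exact ⟨⟨ha.1.ne, hb.1.ne, huv, hc.1.ne⟩, ⟨hab.ne, ha.2.ne.symm, hca.symm⟩,
    ⟨hb.2.ne.symm, hcb.symm⟩, hc.2.ne⟩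

lemma hasInducedKst_two_of_subset_commonNeighbors [DecidableEq V] {u v : V} {B : Finset V}
    (huv : u ≠ v) (hnadj : ¬G.Adj u v) (hB : ↑B ⊆ G.commonNeighbors u v)
    (hBind : G.IsIndepSet B) : hasInducedKst G 2 B.card := by
  have hB' : ∀ b ∈ B, G.Adj u b ∧ G.Adj v b := fun b hb => hB hb
  refine ⟨{u, v}, B, ?_, Finset.card_pair huv, rfl, ?_, ?_, ?_⟩
  · simp only [Finset.disjoint_insert_left, Finset.disjoint_singleton_left]
    exact ⟨fun hu => G.irrefl (hB' u hu).1, fun hv => G.irrefl (hB' v hv).2⟩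
  · simp only [Finset.mem_insert, Finset.mem_singleton]
    rintro a (rfl | rfl) b hb
    exacts [(hB' b hb).1, (hB' b hb).2]
  · simp only [Finset.mem_insert, Finset.mem_singleton]
    rintro a (rfl | rfl) a' (rfl | rfl)
    exacts [G.irrefl, hnadj, fun h => hnadj h.symm, G.irrefl]
  · intro b hb b' hb'
    rcases eq_or_ne b b' with rfl | hne
    exacts [G.irrefl, hBind hb hb' hne]

end SimpleGraph

theorem stmt_1_general {V : Type*} [Fintype V] [DecidableEq V] (G : SimpleGraph V) [DecidableRel G.Adj]
    (t : ℕ)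
    (hC5 : ¬ hasCycleLength G 5) (hind : ¬ hasInducedKst G 2 t)
    (u v : V) (huv : u ≠ v) (hadj : ¬ G.Adj u v) :
    (G.neighborFinset u ∩ G.neighborFinset v).card ≤ max 3 t - 1 := by
  set S := G.neighborFinset u ∩ G.neighborFinset v
  have hS : (S : Set V) = G.commonNeighbors u v := by simp [S, G.commonNeighbors_eq]
  by_contra! hcard
  by_cases hedge : ∃ a ∈ S, ∃ b ∈ S, G.Adj a b
  · obtain ⟨a, ha, b, hb, hab⟩ := hedge
    obtain ⟨c, hc, hcab⟩ : ∃ c ∈ S, c ∉ ({a, b} : Finset V) :=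
      Finset.exists_mem_notMem_of_card_lt_card (Finset.card_le_two.trans_lt (by omega))
    rw [← Finset.mem_coe, hS] at ha hb hc
    simp only [Finset.mem_insert, Finset.mem_singleton, not_or] at hcab
    exact hC5 (G.hasCycleLength_five_of_adj_commonNeighbors huv ha hb hc hab hcab.1 hcab.2)
  · push Not at hedge
    obtain ⟨B, hBS, rfl⟩ := Finset.exists_subset_card_eq (show t ≤ S.card by omega)
    refine hind (G.hasInducedKst_two_of_subset_commonNeighbors huv hadj ?_ ?_)
    · exact hS ▸ Finset.coe_subset.mpr hBS
    · exact fun a ha b hb _ => hedge a (hBS ha) b (hBS hb)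

theorem stmt_1 {V : Type*} [Fintype V] [DecidableEq V] (G : SimpleGraph V) [DecidableRel G.Adj]
    (t : ℕ) (ht : 2 ≤ t)
    (hC5 : ¬ hasCycleLength G 5) (hind : ¬ hasInducedKst G 2 t)
    (u v : V) (huv : u ≠ v) (hadj : ¬ G.Adj u v) :
    (G.neighborFinset u ∩ G.neighborFinset v).card ≤ max 3 t - 1 :=
  stmt_1_general G t hC5 hind u v huv hadj
end

section
/- Let G be a graph with no cycle of length 5, and let v be a vertex of G. Then the number of edges of G contained in the neighborhood N(v) is at most |N(v)|, the degree of v. -/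
/-!
In a graph with no path on four vertices, the two endpoints of an edge `uw` cannot have private
neighbours `x ∈ N(u) \ {w}` and `y ∈ N(w) \ {u}` with `x ≠ y`, since `x u w y` would be such a
path. Hence `(d(u) - 1)(d(w) - 1) ≤ 1`, i.e. `1/d(u) + 1/d(w) ≥ 1`. Summing this over the edges
gives `|E| ≤ ∑_u d(u) · 1/d(u) ≤ |V|`. Finally, a path `a b c d` inside `N(v)` closes to the
5-cycle `v a b c d v`.
-/

open Finset

namespace SimpleGraph

variable {V : Type*} (G : SimpleGraph V)

/-- No path on four vertices, induced or not: adjacency already gives `a ≠ b`, `b ≠ c`, `c ≠ d`. -/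
def IsP4Free : Prop :=
  ∀ ⦃a b c d : V⦄, G.Adj a b → G.Adj b c → G.Adj c d → a = c ∨ b = d ∨ a = d

variable {G}

lemma hasCycleLength_five_of_adj_s4 {v a b c d : V}
    (hva : G.Adj v a) (hvb : G.Adj v b) (hvc : G.Adj v c) (hvd : G.Adj v d)
    (hab : G.Adj a b) (hbc : G.Adj b c) (hcd : G.Adj c d)
    (hac : a ≠ c) (hbd : b ≠ d) (had : a ≠ d) :
    hasCycleLength G 5 := by
  refine ⟨v, .cons hva (.cons hab (.cons hbc (.cons hcd (.cons hvd.symm .nil)))), ?_, rfl⟩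
  simp [Walk.cons_isCycle_iff, Walk.cons_isPath_iff, hva.ne, hvb.ne, hvc.ne, hvd.ne,
    hva.ne', hvb.ne', hvc.ne', hvd.ne', hab.ne, hbc.ne, hcd.ne, hac, hbd, had]

lemma isP4Free_induce_neighborSet (h : ¬ hasCycleLength G 5) {v : V} {s : Set V}
    (hs : s ⊆ G.neighborSet v) : (G.induce s).IsP4Free := by
  intro a b c d hab hbc hcd
  by_contra! ⟨hac, hbd, had⟩
  exact h <| hasCycleLength_five_of_adj_s4 (hs a.2) (hs b.2) (hs c.2) (hs d.2) hab hbc hcd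
    (Subtype.coe_injective.ne hac) (Subtype.coe_injective.ne hbd) (Subtype.coe_injective.ne had)

variable [Fintype V] [DecidableRel G.Adj]

lemma IsP4Free.card_erase_mul_card_erase_le_one [DecidableEq V] (hG : G.IsP4Free) {u w : V}
    (huw : G.Adj u w) :
    #((G.neighborFinset u).erase w) * #((G.neighborFinset w).erase u) ≤ 1 := by
  rw [← card_product]
  refine card_le_one.2 fun ⟨x, y⟩ hxy ⟨x', y'⟩ hxy' => ?_
  have diag : ∀ p q, (p, q) ∈ (G.neighborFinset u).erase w ×ˢ (G.neighborFinset w).erase u →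
      p = q := by
    intro p q hpq
    simp only [mem_product, mem_erase, mem_neighborFinset] at hpq
    obtain ⟨⟨hpw, hup⟩, hqu, hwq⟩ := hpq
    exact ((hG hup.symm huw hwq).resolve_left hpw).resolve_left hqu.symm
  have hxy'' : (x, y') ∈ (G.neighborFinset u).erase w ×ˢ (G.neighborFinset w).erase u :=
    mem_product.2 ⟨(mem_product.1 hxy).1, (mem_product.1 hxy').2⟩
  obtain rfl := diag _ _ hxy
  obtain rfl := diag _ _ hxy'
  obtain rfl := diag _ _ hxy''
  rfl

lemma IsP4Free.degree_mul_degree_le (hG : G.IsP4Free) {u w : V} (huw : G.Adj u w) :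
    G.degree u * G.degree w ≤ G.degree u + G.degree w := by
  classical
  have := hG.card_erase_mul_card_erase_le_one huw
  rw [card_erase_of_mem (by simpa using huw), card_erase_of_mem (by simpa using huw.symm),
    card_neighborFinset_eq_degree, card_neighborFinset_eq_degree] at this
  have hu := G.degree_pos_iff_exists_adj u |>.2 ⟨w, huw⟩
  have hw := G.degree_pos_iff_exists_adj w |>.2 ⟨u, huw.symm⟩
  obtain ⟨a, ha⟩ := Nat.exists_eq_add_of_lt hu
  obtain ⟨b, hb⟩ := Nat.exists_eq_add_of_lt hw
  rw [ha, hb] at this ⊢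
  simp only [zero_add, Nat.add_sub_cancel] at this
  nlinarith

lemma IsP4Free.one_le_inv_degree_add_inv_degree (hG : G.IsP4Free) {u w : V} (huw : G.Adj u w) :
    1 ≤ (G.degree u : ℚ)⁻¹ + (G.degree w : ℚ)⁻¹ := by
  have hu : (0 : ℚ) < G.degree u := by
    exact_mod_cast G.degree_pos_iff_exists_adj u |>.2 ⟨w, huw⟩
  have hw : (0 : ℚ) < G.degree w := by
    exact_mod_cast G.degree_pos_iff_exists_adj w |>.2 ⟨u, huw.symm⟩
  rw [inv_add_inv hu.ne' hw.ne', one_le_div (by positivity)]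
  exact_mod_cast hG.degree_mul_degree_le huw

lemma sum_dart_fst_eq_sum_degree_smul {M : Type*} [AddCommMonoid M] (f : V → M) :
    ∑ d : G.Dart, f d.fst = ∑ v, G.degree v • f v := by
  classical
  rw [← sum_fiberwise univ (fun d : G.Dart => d.fst)]
  refine sum_congr rfl fun v _ => ?_
  rw [sum_congr rfl fun d hd => congrArg f (mem_filter.1 hd).2, sum_const]
  congr 1
  convert G.dart_fst_fiber_card_eq_degree v

lemma sum_dart_snd_eq_sum_dart_fst {M : Type*} [AddCommMonoid M] (f : V → M) :
    ∑ d : G.Dart, f d.snd = ∑ d : G.Dart, f d.fst :=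
  Fintype.sum_equiv Dart.symm_involutive.toPerm _ _ fun _ => rfl

theorem IsP4Free.card_edgeFinset_le (hG : G.IsP4Free) : #G.edgeFinset ≤ Fintype.card V := by
  have key : (2 * #G.edgeFinset : ℚ) ≤ 2 * Fintype.card V := calc
    (2 * #G.edgeFinset : ℚ) = ∑ _d : G.Dart, 1 := by
      simp [dart_card_eq_twice_card_edges]
    _ ≤ ∑ d : G.Dart, ((G.degree d.fst : ℚ)⁻¹ + (G.degree d.snd : ℚ)⁻¹) :=
      sum_le_sum fun d _ => hG.one_le_inv_degree_add_inv_degree d.adj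
    _ = 2 * ∑ v, G.degree v * (G.degree v : ℚ)⁻¹ := by
      rw [sum_add_distrib, sum_dart_snd_eq_sum_dart_fst (fun v => (G.degree v : ℚ)⁻¹),
        sum_dart_fst_eq_sum_degree_smul (fun v => (G.degree v : ℚ)⁻¹)]
      simp only [nsmul_eq_mul]
      ring
    _ ≤ 2 * Fintype.card V := by
      gcongr
      simpa using sum_le_sum fun v (_ : v ∈ univ) => mul_inv_le_one (a := (G.degree v : ℚ))
  exact_mod_cast (mul_le_mul_iff_right₀ two_pos).1 key

end SimpleGraph

theorem stmt_4 {V : Type*} [Fintype V] (G : SimpleGraph V) [DecidableRel G.Adj]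
    (hC5 : ¬ hasCycleLength G 5) (v : V) :
    Nat.card {e : Sym2 V | e ∈ G.edgeSet ∧ ∀ x ∈ e, x ∈ G.neighborSet v} ≤ G.degree v := by
  classical
  have hset : {e : Sym2 V | e ∈ G.edgeSet ∧ ∀ x ∈ e, x ∈ G.neighborSet v} =
      ↑{e ∈ G.edgeFinset | e.toFinset ⊆ G.neighborFinset v} := by
    ext e
    simp [subset_iff]
  have hP4 : (G.induce ↑(G.neighborFinset v)).IsP4Free :=
    SimpleGraph.isP4Free_induce_neighborSet hC5 (v := v) (by simp)
  rw [hset, Nat.card_coe_set_eq, Set.ncard_coe_finset,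
    SimpleGraph.card_filter_edgeFinset_toFinset_subset]
  refine hP4.card_edgeFinset_le.trans_eq ?_
  rw [← G.card_neighborFinset_eq_degree]
  exact Fintype.card_coe _
end

section
/- Let G be a triangle-free and K_{2,t}-free graph (t ≥ 2) with minimum degree at least δ, and let u be a vertex of G. Let N_1(u) be the set of neighbors of u and N_2(u) the set of vertices at distance exactly 2 from u. Then (t-1)·|N_2(u)| ≥ (δ - 1)·|N_1(u)|. -/
open Finset

namespace SimpleGraph

variable {V : Type*} (G : SimpleGraph V)

theorem dist_eq_two_of_adj_of_adj (hG : G.CliqueFree 3) {u v w : V} (huv : G.Adj u v)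
    (hvw : G.Adj v w) (huw : u ≠ w) : G.dist u w = 2 := by
  classical
  rw [dist, ENat.toNat_eq_iff two_ne_zero, Nat.cast_ofNat, edist_eq_two_iff]
  exact ⟨huw, fun huw' ↦ hG {u, v, w} (is3Clique_triple_iff.2 ⟨huv, huw', hvw⟩),
    v, (G.mem_commonNeighbors).2 ⟨huv, hvw.symm⟩⟩

variable [Fintype V]

noncomputable def distSphere (u : V) (k : ℕ) : Finset V := {w | G.dist u w = k}

theorem card_distSphere (u : V) (k : ℕ) :
    #(G.distSphere u k) = Nat.card {w | G.dist u w = k} := by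
  rw [Nat.card_eq_card_toFinset, distSphere, Set.toFinset_ofPred]

variable [DecidableRel G.Adj]

theorem degree_sub_one_le_card_adj_distSphere_two (hG : G.CliqueFree 3) {u v : V}
    (huv : G.Adj u v) : G.degree v - 1 ≤ #{w ∈ G.distSphere u 2 | G.Adj v w} := by
  classical
  rw [← card_neighborFinset_eq_degree, ← card_erase_of_mem ((G.mem_neighborFinset v u).2 huv.symm)]
  refine card_le_card fun w hw ↦ ?_
  obtain ⟨hwu, hvw⟩ := mem_erase.1 hw
  simp only [distSphere, mem_filter, mem_univ, true_and]
  exact ⟨G.dist_eq_two_of_adj_of_adj hG huv ((G.mem_neighborFinset v w).1 hvw) (Ne.symm hwu),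
    (G.mem_neighborFinset v w).1 hvw⟩

theorem card_filter_adj_lt_of_not_hasKst {t : ℕ} (hK : ¬ hasKst G 2 t) {u w : V} (huw : u ≠ w) :
    #{v ∈ G.neighborFinset u | G.Adj v w} < t := by
  classical
  by_contra! ht
  obtain ⟨B, hB, hBcard⟩ := exists_subset_card_eq ht
  have hBadj : ∀ b ∈ B, G.Adj u b ∧ G.Adj b w := fun b hb ↦ by
    simpa only [mem_filter, mem_neighborFinset] using hB hb
  refine hK ⟨{u, w}, B, ?_, card_pair huw, hBcard, ?_⟩
  · refine Finset.disjoint_left.2 fun a ha haB ↦ ?_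
    obtain ⟨hua, haw⟩ := hBadj a haB
    rcases mem_insert.1 ha with rfl | ha
    exacts [G.irrefl hua, G.irrefl (mem_singleton.1 ha ▸ haw)]
  · intro a ha b hb
    rcases mem_insert.1 ha with rfl | ha
    exacts [(hBadj b hb).1, mem_singleton.1 ha ▸ (hBadj b hb).2.symm]

end SimpleGraph

theorem stmt_5_general {V : Type*} [Fintype V] (G : SimpleGraph V) [DecidableRel G.Adj]
    (t δ : ℕ)
    (htri : G.CliqueFree 3) (hK : ¬ hasKst G 2 t)
    (hmin : ∀ v, δ ≤ G.degree v) (u : V) :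
    (δ - 1) * G.degree u ≤ (t - 1) * Nat.card {w : V | G.dist u w = 2} := by
  have hN1 : ∀ v ∈ G.neighborFinset u, δ - 1 ≤ #((G.distSphere u 2).bipartiteAbove G.Adj v) :=
    fun v hv ↦ (Nat.sub_le_sub_right (hmin v) 1).trans
      (G.degree_sub_one_le_card_adj_distSphere_two htri (G.mem_neighborFinset u v |>.1 hv))
  have hN2 : ∀ w ∈ G.distSphere u 2, #((G.neighborFinset u).bipartiteBelow G.Adj w) ≤ t - 1 := by
    intro w hw
    have huw : u ≠ w := by
      rintro rfl
      simp [SimpleGraph.distSphere] at hw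
    exact Nat.le_sub_one_of_lt (G.card_filter_adj_lt_of_not_hasKst hK huw)
  have hcount := card_mul_le_card_mul G.Adj hN1 hN2
  rw [G.card_neighborFinset_eq_degree, G.card_distSphere] at hcount
  rwa [mul_comm, mul_comm (t - 1)]

theorem stmt_5 {V : Type*} [Fintype V] (G : SimpleGraph V) [DecidableRel G.Adj]
    (t δ : ℕ) (ht : 2 ≤ t)
    (htri : G.CliqueFree 3) (hK : ¬ hasKst G 2 t)
    (hmin : ∀ v, δ ≤ G.degree v) (u : V) :
    (δ - 1) * G.degree u ≤ (t - 1) * Nat.card {w : V | G.dist u w = 2} :=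
  stmt_5_general G t δ htri hK hmin u
end

section
/- Let G be a graph with n vertices that is triangle-free, K_{2,t}-free (t ≥ 2), has minimum degree at least d/2 where d ≥ 4, and has a vertex u of degree greater than 4d. Then n > 2d²/(t-1). -/
/-!
Let `N` be the neighbourhood of `u` and `W` the set of vertices outside `N ∪ {u}`. Since `G` is
triangle-free, every `v ∈ N` sends all of its `deg v - 1 ≥ d/2 - 1` edges other than `uv` into `W`;
since `G` is `K_{2,t}`-free, every `w ∈ W` has at most `t - 1` neighbours in `N`. Counting the
edges between `N` and `W` from both sides gives `deg u · (d/2 - 1) ≤ (t - 1)(n - deg u - 1)`, and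
`deg u > 4d` turns this into `(t - 1) n > 2d²`.
-/

open Finset

namespace SimpleGraph

variable {V : Type*} {G : SimpleGraph V} {u v w : V}

theorem card_neighborFinset_inter_lt_of_not_hasKst [Fintype V] [DecidableRel G.Adj]
    [DecidableEq V] {t : ℕ} (hK : ¬ hasKst G 2 t) (huw : u ≠ w) :
    #(G.neighborFinset u ∩ G.neighborFinset w) < t := by
  by_contra! ht
  obtain ⟨B, hB, hBcard⟩ := exists_subset_card_eq ht
  have hBadj : ∀ b ∈ B, G.Adj u b ∧ G.Adj w b := fun b hb => by
    simpa using hB hb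
  refine hK ⟨{u, w}, B, ?_, card_pair huw, hBcard, ?_⟩
  · simp only [disjoint_insert_left, disjoint_singleton_left]
    exact ⟨fun hu => G.loopless.irrefl u (hBadj u hu).1,
      fun hw => G.loopless.irrefl w (hBadj w hw).2⟩
  · simp only [mem_insert, mem_singleton]
    rintro a (rfl | rfl) b hb
    exacts [(hBadj b hb).1, (hBadj b hb).2]

theorem CliqueFree.filter_adj_compl_insert_neighborFinset [Fintype V] [DecidableRel G.Adj]
    [DecidableEq V] (htri : G.CliqueFree 3) (huv : G.Adj u v) :
    {w ∈ (insert u (G.neighborFinset u))ᶜ | G.Adj v w} = (G.neighborFinset v).erase u := by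
  ext w
  simp only [mem_filter, mem_compl, mem_insert, mem_neighborFinset, mem_erase, not_or]
  constructor
  · rintro ⟨⟨hwu, -⟩, hvw⟩
    exact ⟨hwu, hvw⟩
  · rintro ⟨hwu, hvw⟩
    exact ⟨⟨hwu, fun huw => htri {u, v, w} (is3Clique_triple_iff.mpr ⟨huv, huw, hvw⟩)⟩, hvw⟩

theorem sum_degree_sub_one_le_of_cliqueFree_of_not_hasKst [Fintype V] [DecidableRel G.Adj]
    {t : ℕ} (htri : G.CliqueFree 3) (hK : ¬ hasKst G 2 t) (u : V) :
    ∑ v ∈ G.neighborFinset u, (G.degree v - 1) ≤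
      (t - 1) * (Fintype.card V - (G.degree u + 1)) := by
  classical
  set W := (insert u (G.neighborFinset u))ᶜ
  have hW : #W = Fintype.card V - (G.degree u + 1) := by
    rw [card_compl, card_insert_of_notMem (by simp), card_neighborFinset_eq_degree]
  calc ∑ v ∈ G.neighborFinset u, (G.degree v - 1)
      = ∑ v ∈ G.neighborFinset u, #(W.bipartiteAbove G.Adj v) := by
        refine sum_congr rfl fun v hv => ?_
        have huv : G.Adj u v := (mem_neighborFinset G u v).mp hv
        rw [bipartiteAbove, htri.filter_adj_compl_insert_neighborFinset huv,
          card_erase_of_mem ((mem_neighborFinset G v u).mpr huv.symm),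
          card_neighborFinset_eq_degree]
    _ = ∑ w ∈ W, #((G.neighborFinset u).bipartiteBelow G.Adj w) :=
        sum_card_bipartiteAbove_eq_sum_card_bipartiteBelow _
    _ ≤ ∑ _w ∈ W, (t - 1) := by
        refine sum_le_sum fun w hw => ?_
        have huw : u ≠ w := fun h => by simp [W, h] at hw
        have hlt := card_neighborFinset_inter_lt_of_not_hasKst hK huw
        have hbelow : (G.neighborFinset u).bipartiteBelow G.Adj w =
            G.neighborFinset u ∩ G.neighborFinset w := by
          ext v
          simp [bipartiteBelow, G.adj_comm v w]
        rw [hbelow]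
        omega
    _ = (t - 1) * (Fintype.card V - (G.degree u + 1)) := by
        rw [sum_const, smul_eq_mul, hW, mul_comm]

end SimpleGraph

open SimpleGraph in
theorem stmt_7 {V : Type*} [Fintype V] (G : SimpleGraph V) [DecidableRel G.Adj]
    (t : ℕ) (ht : 2 ≤ t) (d : ℝ) (hd : 4 ≤ d)
    (htri : G.CliqueFree 3) (hK : ¬ hasKst G 2 t)
    (hmin : ∀ v, d / 2 ≤ (G.degree v : ℝ))
    (u : V) (hu : 4 * d < (G.degree u : ℝ)) :
    2 * d ^ 2 / ((t : ℝ) - 1) < (Fintype.card V : ℝ) := by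
  have hdeg_pos : ∀ v ∈ G.neighborFinset u, 1 ≤ G.degree v := fun v hv =>
    (G.degree_pos_iff_exists_adj v).mpr ⟨u, ((mem_neighborFinset G u v).mp hv).symm⟩
  have hlower : (G.degree u : ℝ) * (d / 2 - 1) ≤
      ∑ v ∈ G.neighborFinset u, ((G.degree v - 1 : ℕ) : ℝ) := by
    rw [← card_neighborFinset_eq_degree, ← nsmul_eq_mul]
    refine card_nsmul_le_sum _ _ _ fun v hv => ?_
    rw [Nat.cast_sub (hdeg_pos v hv)]
    linarith [hmin v]
  have hupper : ∑ v ∈ G.neighborFinset u, ((G.degree v - 1 : ℕ) : ℝ) ≤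
      ((t : ℝ) - 1) * ((Fintype.card V : ℝ) - (G.degree u + 1)) := by
    have h := sum_degree_sub_one_le_of_cliqueFree_of_not_hasKst htri hK u
    rw [← Nat.cast_le (α := ℝ), Nat.cast_mul, Nat.cast_sub (G.degree_lt_card_verts u),
      Nat.cast_sub (by omega : 1 ≤ t)] at h
    push_cast at h
    exact h
  have ht1 : (1 : ℝ) ≤ (t : ℝ) - 1 := by
    have : (2 : ℝ) ≤ t := by exact_mod_cast ht
    linarith
  rw [div_lt_iff₀ (by linarith)]
  nlinarith
end

section
/- Let G be a bipartite graph with parts A and B where |A| + |B| = n, containing no subgraph isomorphic to K_{2,t} with the part of size 2 in one class and the part of size t in the other (t ≥ 2). Then the number of edges of G is at most (1/2)(1 + sqrt(1 + 4(t-1)(n/2 - 1)))·(n/2) + n/2, and in particular at most sqrt(t-1)·(n/2)^{3/2} + n. -/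
/-!
Count cherries (paths of length two) by their centre. Centred in `B`, their number is
`∑_{w ∈ B} d(w)(d(w) - 1)`; read off their endpoints in `A` it is at most `(t - 1)|A|(|A| - 1)`.
With `e = ∑_{w ∈ B} d(w)` and Cauchy–Schwarz, `e² - |B| e ≤ |B| (t - 1) |A| (|A| - 1)`,
hence `e ≤ |B| + √((t - 1) |A| (|A| - 1) |B|)`. Averaging this with the bound centred in `A`,
and using `|A| |B| ≤ (n/2)²` and concavity of the square root, gives
`e ≤ n/2 + √(t - 1) (n/2) √(n/2 - 1)`, which is below both stated bounds.
-/

open Finset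

theorem Finset.cast_card_offDiag {α R : Type*} [Ring R] (s : Finset α) :
    (#s.offDiag : R) = #s * (#s - 1) := by
  rw [offDiag_card, Nat.cast_sub (Nat.le_mul_self _), Nat.cast_mul, mul_sub_one]

namespace Real

theorem le_add_sqrt_mul_of_sq_le {S m C : ℝ} (hm : 0 ≤ m) (h : S ^ 2 ≤ m * C + m * S) :
    S ≤ m + √(m * C) := by
  rcases le_or_gt S m with hSm | hSm
  · linarith [sqrt_nonneg (m * C)]
  · have : S - m ≤ √(m * C) := (le_sqrt' (by linarith)).2 (by nlinarith)
    linarith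

theorem le_half_add_of_le_add_sqrt {a b : ℕ} {c e n : ℝ} (hc : 0 ≤ c) (hn : a + b ≤ n)
    (hb : e ≤ b + √(b * (a * (a - 1) * c))) (ha : e ≤ a + √(a * (b * (b - 1) * c))) :
    e ≤ n / 2 + √c * (n / 2) * √(n / 2 - 1) := by
  have hn0 : 0 ≤ n := le_trans (by positivity) hn
  have hbound_nonneg : 0 ≤ n / 2 + √c * (n / 2) * √(n / 2 - 1) := by positivity
  rcases Nat.eq_zero_or_pos a with rfl | ha1
  · simp only [Nat.cast_zero, zero_mul, sqrt_zero, zero_add] at ha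
    linarith
  rcases Nat.eq_zero_or_pos b with rfl | hb1
  · simp only [Nat.cast_zero, zero_mul, sqrt_zero, zero_add] at hb
    linarith
  have ha1 : (1 : ℝ) ≤ a := by exact_mod_cast ha1
  have hb1 : (1 : ℝ) ≤ b := by exact_mod_cast hb1
  have hsplit : ∀ x y : ℝ, 1 ≤ x → 0 ≤ y →
      √(y * (x * (x - 1) * c)) = √c * √(x * y) * √(x - 1) := by
    intro x y hx hy
    rw [show y * (x * (x - 1) * c) = c * (x * y) * (x - 1) by ring,
      sqrt_mul (by positivity), sqrt_mul hc]
  rw [hsplit _ _ ha1 (by linarith)] at hb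
  rw [hsplit _ _ hb1 (by linarith), mul_comm (b : ℝ)] at ha
  have hamgm : √(a * b) ≤ n / 2 :=
    sqrt_le_iff.2 ⟨by linarith, by nlinarith [sq_nonneg ((a : ℝ) - b)]⟩
  have hconcave : √(a - 1) + √(b - 1) ≤ 2 * √(n / 2 - 1) := by
    refine (pow_le_pow_iff_left₀ (by positivity) (by positivity) two_ne_zero).1 ?_
    nlinarith [sq_sqrt (show (0 : ℝ) ≤ a - 1 by linarith),
      sq_sqrt (show (0 : ℝ) ≤ b - 1 by linarith),
      sq_sqrt (show (0 : ℝ) ≤ n / 2 - 1 by linarith),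
      sq_nonneg (√(a - 1) - √(b - 1))]
  have := mul_le_mul hamgm hconcave (by positivity) (by positivity)
  nlinarith [mul_le_mul_of_nonneg_left this (sqrt_nonneg c)]

theorem half_add_sqrt_mul_le_of_nonneg {c n : ℝ} (hc : 0 ≤ c) (hn : 0 ≤ n) :
    n / 2 + √c * (n / 2) * √(n / 2 - 1) ≤
      1 / 2 * (1 + √(1 + 4 * c * (n / 2 - 1))) * (n / 2) + n / 2 := by
  have h : √c * √(n / 2 - 1) ≤ 1 / 2 * (1 + √(1 + 4 * c * (n / 2 - 1))) := by
    have h4 : √(4 * (c * (n / 2 - 1))) = 2 * (√c * √(n / 2 - 1)) := by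
      rw [sqrt_mul (by norm_num), sqrt_mul hc, show (4 : ℝ) = 2 ^ 2 by norm_num,
        sqrt_sq (by norm_num)]
    have := sqrt_le_sqrt (show 4 * (c * (n / 2 - 1)) ≤ 1 + 4 * c * (n / 2 - 1) by linarith)
    linarith
  nlinarith [mul_le_mul_of_nonneg_right h (show 0 ≤ n / 2 by linarith)]

theorem half_add_sqrt_mul_le_sqrt_mul_rpow {c n : ℝ} (hn : 0 ≤ n) :
    n / 2 + √c * (n / 2) * √(n / 2 - 1) ≤ √c * (n / 2) ^ ((3 : ℝ) / 2) + n := by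
  rw [show (3 : ℝ) / 2 = 1 + 1 / 2 by norm_num, rpow_add' (by linarith) (by norm_num),
    rpow_one, ← sqrt_eq_rpow, ← mul_assoc]
  have : √(n / 2 - 1) ≤ √(n / 2) := sqrt_le_sqrt (by linarith)
  nlinarith [mul_le_mul_of_nonneg_left this (show 0 ≤ √c * (n / 2) by positivity)]

end Real

namespace SimpleGraph

variable {V : Type*} [Fintype V] {G : SimpleGraph V} [DecidableRel G.Adj] {s t : Finset V}

theorem IsBipartiteWith.sum_card_offDiag_neighborFinset (h : G.IsBipartiteWith s t) :
    ∑ w ∈ t, #(G.neighborFinset w).offDiag =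
      ∑ p ∈ s.offDiag, #{w ∈ t | G.Adj p.1 w ∧ G.Adj p.2 w} := by
  calc ∑ w ∈ t, #(G.neighborFinset w).offDiag
      = ∑ w ∈ t, #{p ∈ s.offDiag | G.Adj p.1 w ∧ G.Adj p.2 w} := by
        refine sum_congr rfl fun w hw => ?_
        rw [isBipartiteWith_neighborFinset' h hw]
        congr 1
        ext p
        simp only [mem_offDiag, mem_filter]
        tauto
    _ = _ := (sum_card_bipartiteAbove_eq_sum_card_bipartiteBelow _).symm

theorem IsBipartiteWith.sum_card_offDiag_neighborFinset_le (h : G.IsBipartiteWith s t) {k : ℕ}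
    (hcod : ∀ u ∈ s, ∀ v ∈ s, u ≠ v → Nat.card {w | G.Adj u w ∧ G.Adj v w} ≤ k) :
    ∑ w ∈ t, #(G.neighborFinset w).offDiag ≤ #s.offDiag * k := by
  rw [h.sum_card_offDiag_neighborFinset, ← smul_eq_mul]
  refine sum_le_card_nsmul _ _ _ fun p hp => ?_
  obtain ⟨hu, hv, huv⟩ := mem_offDiag.1 hp
  refine le_trans ?_ (hcod p.1 hu p.2 hv huv)
  rw [Nat.card_eq_card_toFinset, Set.toFinset_ofPred]
  exact card_le_card (filter_subset_filter _ (subset_univ t))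

theorem IsBipartiteWith.card_edgeFinset_le_add_sqrt (h : G.IsBipartiteWith s t) {k : ℕ}
    (hcod : ∀ u ∈ s, ∀ v ∈ s, u ≠ v → Nat.card {w | G.Adj u w ∧ G.Adj v w} ≤ k) :
    (#G.edgeFinset : ℝ) ≤ #t + √(#t * (#s * (#s - 1) * k)) := by
  rw [← isBipartiteWith_sum_degrees_eq_card_edges' h, Nat.cast_sum]
  refine Real.le_add_sqrt_mul_of_sq_le (Nat.cast_nonneg _) ?_
  have hcherries : ∑ w ∈ t, (G.degree w : ℝ) * (G.degree w - 1) ≤ #s * (#s - 1) * k := by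
    have := h.sum_card_offDiag_neighborFinset_le hcod
    rw [← Nat.cast_le (α := ℝ)] at this
    push_cast [Finset.cast_card_offDiag, card_neighborFinset_eq_degree] at this
    exact this
  calc (∑ w ∈ t, (G.degree w : ℝ)) ^ 2
      ≤ #t * ∑ w ∈ t, (G.degree w : ℝ) ^ 2 := sq_sum_le_card_mul_sum_sq
    _ = #t * (∑ w ∈ t, (G.degree w : ℝ) * (G.degree w - 1) +
          ∑ w ∈ t, (G.degree w : ℝ)) := by
        rw [← sum_add_distrib]
        congr 1
        exact sum_congr rfl fun w _ => by ring
    _ ≤ #t * (#s * (#s - 1) * k) + #t * ∑ w ∈ t, (G.degree w : ℝ) := by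
        rw [mul_add]
        gcongr

end SimpleGraph

theorem stmt_8_general {V : Type*} [Fintype V] (G : SimpleGraph V) (A B : Finset V)
    (t : ℕ) (ht : 2 ≤ t)
    (hdisj : Disjoint A B)
    (hbip : ∀ u v, G.Adj u v → (u ∈ A ∧ v ∈ B) ∨ (u ∈ B ∧ v ∈ A))
    (hA : ∀ u v, u ∈ A → v ∈ A → u ≠ v →
      Nat.card {w : V | G.Adj u w ∧ G.Adj v w} ≤ t - 1)
    (hB : ∀ u v, u ∈ B → v ∈ B → u ≠ v →
      Nat.card {w : V | G.Adj u w ∧ G.Adj v w} ≤ t - 1) :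
    (Nat.card G.edgeSet : ℝ) ≤
      (1 / 2) * (1 + Real.sqrt (1 + 4 * ((t : ℝ) - 1) * ((Fintype.card V : ℝ) / 2 - 1))) *
        ((Fintype.card V : ℝ) / 2) + (Fintype.card V : ℝ) / 2 ∧
    (Nat.card G.edgeSet : ℝ) ≤
      Real.sqrt ((t : ℝ) - 1) * ((Fintype.card V : ℝ) / 2) ^ ((3 : ℝ) / 2) +
        (Fintype.card V : ℝ) := by
  classical
  have hG : G.IsBipartiteWith A B := ⟨disjoint_coe.2 hdisj, hbip⟩
  have hc : ((t - 1 : ℕ) : ℝ) = t - 1 := Nat.cast_pred (by omega)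
  have hc0 : (0 : ℝ) ≤ t - 1 := hc ▸ Nat.cast_nonneg _
  have hAB : (#A : ℝ) + #B ≤ Fintype.card V := by
    exact_mod_cast (card_union_of_disjoint hdisj).symm.trans_le (card_le_univ _)
  have hcard := Real.le_half_add_of_le_add_sqrt hc0 hAB
    (hc ▸ hG.card_edgeFinset_le_add_sqrt fun u hu v hv => hA u v hu hv)
    (hc ▸ hG.symm.card_edgeFinset_le_add_sqrt fun u hu v hv => hB u v hu hv)
  rw [Nat.card_eq_card_toFinset]
  exact ⟨hcard.trans (Real.half_add_sqrt_mul_le_of_nonneg hc0 (Nat.cast_nonneg _)),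
    hcard.trans (Real.half_add_sqrt_mul_le_sqrt_mul_rpow (Nat.cast_nonneg _))⟩

theorem stmt_8 {V : Type*} [Fintype V] (G : SimpleGraph V) (A B : Finset V)
    (t : ℕ) (ht : 2 ≤ t)
    (hpart : ∀ v, v ∈ A ∨ v ∈ B) (hdisj : Disjoint A B)
    (hbip : ∀ u v, G.Adj u v → (u ∈ A ∧ v ∈ B) ∨ (u ∈ B ∧ v ∈ A))
    (hA : ∀ u v, u ∈ A → v ∈ A → u ≠ v →
      Nat.card {w : V | G.Adj u w ∧ G.Adj v w} ≤ t - 1)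
    (hB : ∀ u v, u ∈ B → v ∈ B → u ≠ v →
      Nat.card {w : V | G.Adj u w ∧ G.Adj v w} ≤ t - 1) :
    (Nat.card G.edgeSet : ℝ) ≤
      (1 / 2) * (1 + Real.sqrt (1 + 4 * ((t : ℝ) - 1) * ((Fintype.card V : ℝ) / 2 - 1))) *
        ((Fintype.card V : ℝ) / 2) + (Fintype.card V : ℝ) / 2 ∧
    (Nat.card G.edgeSet : ℝ) ≤
      Real.sqrt ((t : ℝ) - 1) * ((Fintype.card V : ℝ) / 2) ^ ((3 : ℝ) / 2) +
        (Fintype.card V : ℝ) :=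
  stmt_8_general G A B t ht hdisj hbip hA hB
end

section
/- Let G be a graph with no cycle of length 2k+1 (k ≥ 2), and let v be a vertex of G. Suppose the edges induced by N_2(v) (the set of vertices at distance exactly 2 from v) are 2-colored so that a subgraph B consists of edges whose endpoints lie in distinct sets S'_q, S'_{q'} of a partition of N_2(v) indexed by neighbors q of v, where each vertex of S'_q is adjacent to q, and the edges of B are properly non-monochromatic under a red/blue coloring of the parts. Then B contains no path with 2k-2 vertices (path of length 2k-3). -/
namespace SimpleGraph

variable {V : Type*} {G : SimpleGraph V}

theorem Coloring.ne_of_odd_length (c : G.Coloring Bool) {u v : V} (p : G.Walk u v)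
    (hp : Odd p.length) : c u ≠ c v := fun h =>
  Nat.not_even_iff_odd.2 hp ((c.even_length_iff_congr p).2 (by rw [h]))

theorem Walk.mem_of_mem_support {S : Set V} (hS : ∀ a b, G.Adj a b → a ∈ S) {x y : V}
    {p : G.Walk x y} (hp : ¬p.Nil) {u : V} (hu : u ∈ p.support) : u ∈ S := by
  obtain ⟨e, he, hue⟩ := (Walk.mem_support_iff_exists_mem_edges_of_not_nil hp).1 hu
  induction e using Sym2.ind with
  | h a b =>
    rcases Sym2.mem_iff.1 hue with rfl | rfl
    · exact hS _ _ (p.adj_of_mem_edges he)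
    · exact hS _ _ (p.adj_of_mem_edges he).symm

theorem hasCycleLength_add_four {x y a b v : V} {p : G.Walk x y} (hp : p.IsPath)
    (hva : G.Adj v a) (hax : G.Adj a x) (hyb : G.Adj y b) (hbv : G.Adj b v) (hab : a ≠ b)
    (ha : a ∉ p.support) (hb : b ∉ p.support) (hv : v ∉ p.support) :
    hasCycleLength G (p.length + 4) := by
  set q : G.Walk a v := ((Walk.cons hax p).concat hyb).concat hbv
  have hq : q.IsPath := by
    refine ((hp.cons ha).concat ?_ hyb).concat ?_ hbv
    · simp [hab.symm, hb]
    · simp [hv, hva.ne, hbv.ne.symm]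
  have hqlen : q.length = p.length + 3 := by simp [q]
  refine ⟨v, Walk.cons hva q, (Walk.cons_isCycle_iff q hva).2 ⟨hq, fun he => ?_⟩, by simp [hqlen]⟩
  have := hq.length_eq_one_of_mem_edges (Sym2.eq_swap ▸ he)
  omega

end SimpleGraph

open SimpleGraph

theorem stmt_9_general {V : Type*} (G : SimpleGraph V) (k : ℕ) (hk : 2 ≤ k)
    (hC : ¬ hasCycleLength G (2 * k + 1)) (v : V)
    (f : V → V) (hf : ∀ w, G.dist v w = 2 → G.Adj v (f w) ∧ G.Adj (f w) w)
    (col : V → Bool) :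
    ¬ ∃ (x y : V)
        (p : (SimpleGraph.fromRel (fun a b =>
          G.Adj a b ∧ G.dist v a = 2 ∧ G.dist v b = 2 ∧ col (f a) ≠ col (f b))).Walk x y),
        p.IsPath ∧ p.length = 2 * k - 3 := by
  set B := fromRel fun a b =>
    G.Adj a b ∧ G.dist v a = 2 ∧ G.dist v b = 2 ∧ col (f a) ≠ col (f b)
  rintro ⟨x, y, p, hp, hlen⟩
  have hB : ∀ {a b}, B.Adj a b → G.Adj a b ∧ G.dist v a = 2 ∧ col (f a) ≠ col (f b) := by
    rintro a b ⟨-, ⟨hab, ha, -, hcol⟩ | ⟨hba, -, hb, hcol⟩⟩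
    exacts [⟨hab, ha, hcol⟩, ⟨hba.symm, hb, hcol.symm⟩]
  let c : B.Coloring Bool := Coloring.mk (fun a => col (f a)) fun h => (hB h).2.2
  have hcol : col (f x) ≠ col (f y) := c.ne_of_odd_length p (by rw [hlen, Nat.odd_iff]; omega)
  have hdist : ∀ u ∈ p.support, G.dist v u = 2 := fun u =>
    p.mem_of_mem_support (S := {u | G.dist v u = 2}) (fun _ _ h => (hB h).2.1)
      (by rw [← Walk.length_eq_zero_iff]; omega)
  have hBG : B ≤ G := fun _ _ h => (hB h).1
  have hnear : ∀ w, G.dist v w ≤ 1 → w ∉ (p.mapLe hBG).support := fun w hw hu => by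
    have := hdist w (Walk.support_mapLe_eq_support hBG p ▸ hu)
    omega
  obtain ⟨hvx, hxx⟩ := hf x (hdist x p.start_mem_support)
  obtain ⟨hvy, hyy⟩ := hf y (hdist y p.end_mem_support)
  have hcycle := hasCycleLength_add_four ((Walk.isPath_mapLe hBG).2 hp)
    hvx hxx hyy.symm hvy.symm (fun h => hcol (congrArg col h))
    (hnear _ (dist_eq_one_iff_adj.2 hvx).le) (hnear _ (dist_eq_one_iff_adj.2 hvy).le)
    (hnear v (by simp))
  rw [Walk.length_mapLe, hlen, show 2 * k - 3 + 4 = 2 * k + 1 by omega] at hcycle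
  exact hC hcycle

theorem stmt_9 {V : Type*} [Fintype V] (G : SimpleGraph V) (k : ℕ) (hk : 2 ≤ k)
    (hC : ¬ hasCycleLength G (2 * k + 1)) (v : V)
    (f : V → V) (hf : ∀ w, G.dist v w = 2 → G.Adj v (f w) ∧ G.Adj (f w) w)
    (col : V → Bool) :
    ¬ ∃ (x y : V)
        (p : (SimpleGraph.fromRel (fun a b =>
          G.Adj a b ∧ G.dist v a = 2 ∧ G.dist v b = 2 ∧ col (f a) ≠ col (f b))).Walk x y),
        p.IsPath ∧ p.length = 2 * k - 3 :=
  stmt_9_general G k hk hC v f hf col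
end

section
/- Any graph G on n vertices with average degree d contains at least n·d³ walks of length 3, i.e., at least n·d³ sequences v0,v1,v2,v3 of vertices with v0v1, v1v2, v2v3 all edges of G. -/
/-!
Index a walk `a u v b` by its middle dart `(u, v)`: there are `W = ∑ deg u * deg v` walks,
the sum running over the `m = 2|E|` darts, while `∑ 1 / deg u ≤ n` over the darts, each
non-isolated `u` contributing `1`. With `r = √(deg u * deg v)`, Cauchy–Schwarz gives
`m² ≤ (∑ r) (∑ 1 / r)` and `(∑ r)² ≤ m W`, and AM–GM gives
`1 / r ≤ (1 / deg u + 1 / deg v) / 2`, so `∑ 1 / r ≤ n`. Hence `m³ ≤ n² W`, i.e. `n d³ ≤ W`.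
-/

open Finset

theorem inv_sqrt_mul_sqrt_le {a b : ℝ} (ha : 0 < a) (hb : 0 < b) :
    (√a * √b)⁻¹ ≤ (a⁻¹ + b⁻¹) / 2 := by
  have hamgm := two_mul_le_add_sq (√a)⁻¹ (√b)⁻¹
  rw [inv_pow, inv_pow, Real.sq_sqrt ha.le, Real.sq_sqrt hb.le] at hamgm
  rw [mul_inv]
  linarith

theorem card_pow_three_le_sq_mul_sum_mul {ι : Type*} (s : Finset ι) {x y : ι → ℝ} {c : ℝ}
    (hx : ∀ i ∈ s, 0 < x i) (hy : ∀ i ∈ s, 0 < y i)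
    (hxc : ∑ i ∈ s, (x i)⁻¹ ≤ c) (hyc : ∑ i ∈ s, (y i)⁻¹ ≤ c) :
    (#s : ℝ) ^ 3 ≤ c ^ 2 * ∑ i ∈ s, x i * y i := by
  set r : ι → ℝ := fun i ↦ √(x i) * √(y i)
  have hr : ∀ i ∈ s, 0 < r i := fun i hi ↦ by
    have := hx i hi; have := hy i hi; positivity
  have hcs₁ : (#s : ℝ) ^ 2 ≤ (∑ i ∈ s, r i) * ∑ i ∈ s, (r i)⁻¹ := by
    simpa using sum_sq_le_sum_mul_sum_of_sq_le_mul s (r := 1) (fun i hi ↦ (hr i hi).le)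
      (fun i hi ↦ (inv_pos.2 (hr i hi)).le)
      (fun i hi ↦ by simp [(hr i hi).ne'])
  have hcs₂ : (∑ i ∈ s, r i) ^ 2 ≤ #s * ∑ i ∈ s, x i * y i := by
    have hsq : ∀ i ∈ s, r i ^ 2 = x i * y i := fun i hi ↦ by
      rw [mul_pow, Real.sq_sqrt (hx i hi).le, Real.sq_sqrt (hy i hi).le]
    rw [← sum_congr rfl hsq]
    exact sq_sum_le_card_mul_sum_sq
  have hinv : ∑ i ∈ s, (r i)⁻¹ ≤ c := calc
    _ ≤ ∑ i ∈ s, ((x i)⁻¹ + (y i)⁻¹) / 2 :=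
      sum_le_sum fun i hi ↦ inv_sqrt_mul_sqrt_le (hx i hi) (hy i hi)
    _ ≤ c := by rw [← sum_div, sum_add_distrib]; linarith
  have hRinv : 0 ≤ ∑ i ∈ s, (r i)⁻¹ := sum_nonneg fun i hi ↦ (inv_pos.2 (hr i hi)).le
  have hW : 0 ≤ ∑ i ∈ s, x i * y i := sum_nonneg fun i hi ↦ (mul_pos (hx i hi) (hy i hi)).le
  rcases s.eq_empty_or_nonempty with rfl | hs
  · simp
  have hs' : (0 : ℝ) < #s := by exact_mod_cast hs.card_pos
  refine le_of_mul_le_mul_left ?_ hs'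
  calc (#s : ℝ) * #s ^ 3 = ((#s : ℝ) ^ 2) ^ 2 := by ring
    _ ≤ ((∑ i ∈ s, r i) * ∑ i ∈ s, (r i)⁻¹) ^ 2 := by gcongr
    _ = (∑ i ∈ s, r i) ^ 2 * (∑ i ∈ s, (r i)⁻¹) ^ 2 := mul_pow ..
    _ ≤ (#s * ∑ i ∈ s, x i * y i) * c ^ 2 := by gcongr
    _ = #s * (c ^ 2 * ∑ i ∈ s, x i * y i) := by ring

namespace SimpleGraph

def walkThreeEquivSigma {V : Type*} (G : SimpleGraph V) :
    {q : V × V × V × V | G.Adj q.1 q.2.1 ∧ G.Adj q.2.1 q.2.2.1 ∧ G.Adj q.2.2.1 q.2.2.2} ≃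
      Σ d : G.Dart, G.neighborSet d.fst × G.neighborSet d.snd where
  toFun q := ⟨⟨(q.1.2.1, q.1.2.2.1), q.2.2.1⟩, ⟨q.1.1, q.2.1.symm⟩, ⟨q.1.2.2.2, q.2.2.2⟩⟩
  invFun w := ⟨(w.2.1, w.1.fst, w.1.snd, w.2.2), w.2.1.2.symm, w.1.adj, w.2.2.2⟩
  left_inv _ := rfl
  right_inv _ := rfl

variable {V : Type*} [Fintype V] (G : SimpleGraph V) [DecidableRel G.Adj]

theorem degree_fst_pos (d : G.Dart) : 0 < G.degree d.fst :=
  G.degree_pos_iff_exists_adj _ |>.2 ⟨_, d.adj⟩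

theorem sum_dart_inv_degree_fst_le :
    ∑ d : G.Dart, ((G.degree d.fst : ℝ))⁻¹ ≤ Fintype.card V := by
  classical
  rw [← sum_fiberwise univ (fun d : G.Dart ↦ d.fst), Fintype.card_eq_sum_ones, Nat.cast_sum,
    Nat.cast_one]
  refine sum_le_sum fun v _ ↦ ?_
  have hfiber : ∑ d : G.Dart with d.fst = v, ((G.degree d.fst : ℝ))⁻¹
      = G.degree v * (G.degree v : ℝ)⁻¹ := by
    rw [sum_congr rfl fun d hd ↦ by rw [(mem_filter.1 hd).2], sum_const, nsmul_eq_mul]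
    congr 1
    exact_mod_cast G.dart_fst_fiber_card_eq_degree v
  exact hfiber.trans_le mul_inv_le_one

theorem sum_dart_inv_degree_snd_le :
    ∑ d : G.Dart, ((G.degree d.snd : ℝ))⁻¹ ≤ Fintype.card V := by
  rw [← Equiv.sum_comp (Dart.symm_involutive.toPerm _)]
  exact G.sum_dart_inv_degree_fst_le

theorem card_walks_three_eq_sum_dart :
    Nat.card {q : V × V × V × V |
      G.Adj q.1 q.2.1 ∧ G.Adj q.2.1 q.2.2.1 ∧ G.Adj q.2.2.1 q.2.2.2} =
      ∑ d : G.Dart, G.degree d.fst * G.degree d.snd := by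
  rw [Nat.card_congr G.walkThreeEquivSigma, Nat.card_sigma]
  simp only [Nat.card_eq_fintype_card, Fintype.card_prod, card_neighborSet_eq_degree]

end SimpleGraph

theorem stmt_11 {V : Type*} [Fintype V] (G : SimpleGraph V) [DecidableRel G.Adj]
    (d : ℝ) (hd : d = 2 * (G.edgeFinset.card : ℝ) / (Fintype.card V : ℝ)) :
    (Fintype.card V : ℝ) * d ^ 3 ≤ (Nat.card {q : V × V × V × V |
      G.Adj q.1 q.2.1 ∧ G.Adj q.2.1 q.2.2.1 ∧ G.Adj q.2.2.1 q.2.2.2} : ℝ) := by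
  have hdarts := card_pow_three_le_sq_mul_sum_mul univ
    (x := fun d : G.Dart ↦ (G.degree d.fst : ℝ)) (y := fun d ↦ (G.degree d.snd : ℝ))
    (fun d _ ↦ Nat.cast_pos.2 (G.degree_fst_pos d))
    (fun d _ ↦ Nat.cast_pos.2 (G.degree_fst_pos d.symm))
    G.sum_dart_inv_degree_fst_le G.sum_dart_inv_degree_snd_le
  rw [card_univ, G.dart_card_eq_twice_card_edges] at hdarts
  rw [G.card_walks_three_eq_sum_dart, hd]
  push_cast at hdarts ⊢
  rcases (Fintype.card V).eq_zero_or_pos with hn | hn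
  · simp only [hn, CharP.cast_eq_zero, zero_mul]
    positivity
  have hn' : (0 : ℝ) < Fintype.card V := Nat.cast_pos.2 hn
  calc (Fintype.card V : ℝ) * (2 * #G.edgeFinset / Fintype.card V) ^ 3
      = (2 * #G.edgeFinset) ^ 3 / (Fintype.card V : ℝ) ^ 2 := by field_simp
    _ ≤ _ := by rw [div_le_iff₀ (by positivity)]; linarith
end

section
/- Let G be a graph with no cycle of length 5 and no induced copy of K_{2,t} (t ≥ 2). Let xy be an edge of G. Call a path v0v1v2v3 (4 distinct vertices, 3 edges) good if v1 and v3 are non-adjacent. Then for any vertex w distinct from x and y, the number of good 3-paths whose first edge is xy (i.e., {v0,v1} = {x,y} as an ordered pair (x,y) or (y,x)) and whose last vertex is w is at most max(3,t) - 1. -/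
/-!
The middle vertex `u` of a good 3-path `a b u w` is a common neighbour of the non-adjacent
vertices `b` and `w`. Two non-adjacent vertices have fewer than `max 3 t` common neighbours: an
edge `u u'` among them closes a `C₅` through any third one, and otherwise `t` of them span an
induced `K_{2,t}`. If good paths `x y u w` and `y x u' w` both exist, then `u = u'`, since
otherwise `x y u w u' x` is a `C₅`; so in that case there are only two paths.
-/

open SimpleGraph

section

variable {V : Type*} {G : SimpleGraph V}

lemma hasCycleLength_five_of_adj {a b c d e : V}
    (hab : G.Adj a b) (hbc : G.Adj b c) (hcd : G.Adj c d) (hde : G.Adj d e) (hea : G.Adj e a)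
    (hac : a ≠ c) (had : a ≠ d) (hbd : b ≠ d) (hbe : b ≠ e) (hce : c ≠ e) :
    hasCycleLength G 5 := by
  refine ⟨a, .cons hab (.cons hbc (.cons hcd (.cons hde (.cons hea .nil)))), ?_, rfl⟩
  have := hab.ne; have := hbc.ne; have := hcd.ne; have := hde.ne; have := hea.ne
  simp [Walk.isCycle_def, Walk.isTrail_def, List.Nodup]
  aesop

lemma commonNeighbors_subset_pair_of_adj (hC5 : ¬ hasCycleLength G 5) {y w u u' : V}
    (hyw : y ≠ w) (hu : u ∈ G.commonNeighbors y w) (hu' : u' ∈ G.commonNeighbors y w)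
    (huu' : G.Adj u u') : G.commonNeighbors y w ⊆ {u, u'} := by
  intro v hv
  rw [G.mem_commonNeighbors] at hu hu' hv
  by_contra hne
  simp only [Set.mem_insert_iff, Set.mem_singleton_iff, not_or] at hne
  exact hC5 (hasCycleLength_five_of_adj hu.1 huu' hu'.2.symm hv.2 hv.1.symm
    hu'.1.ne hyw hu.2.ne.symm (Ne.symm hne.1) (Ne.symm hne.2))

lemma hasInducedKst_of_isIndepSet_commonNeighbors {y w : V} (hyw : y ≠ w)
    (hnadj : ¬ G.Adj y w) {B : Finset V} (hB : (B : Set V) ⊆ G.commonNeighbors y w)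
    (hBind : G.IsIndepSet B) : hasInducedKst G 2 B.card := by
  classical
  have hmem : ∀ b ∈ B, G.Adj y b ∧ G.Adj w b := fun b hb => G.mem_commonNeighbors.mp (hB hb)
  refine ⟨{y, w}, B, ?_, Finset.card_pair hyw, rfl, ?_, ?_, ?_⟩
  · refine Finset.disjoint_left.mpr fun a ha haB => ?_
    simp only [Finset.mem_insert, Finset.mem_singleton] at ha
    rcases ha with rfl | rfl
    exacts [G.irrefl (hmem a haB).1, G.irrefl (hmem a haB).2]
  · intro a ha b hb
    simp only [Finset.mem_insert, Finset.mem_singleton] at ha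
    rcases ha with rfl | rfl
    exacts [(hmem b hb).1, (hmem b hb).2]
  · intro a ha a' ha'
    simp only [Finset.mem_insert, Finset.mem_singleton] at ha ha'
    rcases ha with rfl | rfl <;> rcases ha' with rfl | rfl
    exacts [G.irrefl, hnadj, fun h => hnadj h.symm, G.irrefl]
  · intro b hb b' hb' hbb'
    by_cases h : b = b'
    · exact G.ne_of_adj hbb' h
    · exact hBind hb hb' h hbb'

theorem ncard_commonNeighbors_lt [Finite V] {t : ℕ} (hC5 : ¬ hasCycleLength G 5)
    (hind : ¬ hasInducedKst G 2 t) {y w : V} (hyw : y ≠ w) (hnadj : ¬ G.Adj y w) :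
    (G.commonNeighbors y w).ncard < max 3 t := by
  by_cases hedge : ∃ u ∈ G.commonNeighbors y w, ∃ u' ∈ G.commonNeighbors y w, G.Adj u u'
  · obtain ⟨u, hu, u', hu', huu'⟩ := hedge
    calc (G.commonNeighbors y w).ncard
        ≤ ({u, u'} : Set V).ncard :=
          Set.ncard_le_ncard (commonNeighbors_subset_pair_of_adj hC5 hyw hu hu' huu')
      _ = 2 := Set.ncard_pair huu'.ne
      _ < max 3 t := by omega
  · push Not at hedge
    by_contra! hcard
    obtain ⟨S, hS, hScard⟩ := Set.exists_subset_card_eq (le_of_max_le_right hcard)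
    obtain ⟨B, rfl⟩ := (Set.toFinite S).exists_finset_coe
    rw [Set.ncard_coe_finset] at hScard
    exact hind (hScard ▸ hasInducedKst_of_isIndepSet_commonNeighbors hyw hnadj hS
      fun u hu u' hu' _ => hedge u (hS hu) u' (hS hu'))

def IsGood3Path (G : SimpleGraph V) (a b c d : V) : Prop :=
  [a, b, c, d].Pairwise (· ≠ ·) ∧ G.Adj a b ∧ G.Adj b c ∧ G.Adj c d ∧ ¬ G.Adj b d

namespace IsGood3Path

variable {a b c d : V}

lemma mem_commonNeighbors (h : IsGood3Path G a b c d) : c ∈ G.commonNeighbors b d :=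
  ⟨h.2.2.1, h.2.2.2.1.symm⟩

lemma ne_last (h : IsGood3Path G a b c d) : b ≠ d := by
  have := h.1; simp_all

lemma eq_of_swap (hC5 : ¬ hasCycleLength G 5) {c' : V} (h : IsGood3Path G a b c d)
    (h' : IsGood3Path G b a c' d) : c = c' := by
  by_contra hne
  obtain ⟨hd, hab, hbc, hcd, -⟩ := h
  obtain ⟨hd', -, hac', hc'd, -⟩ := h'
  simp only [List.pairwise_cons, List.mem_cons, List.not_mem_nil] at hd hd'
  exact hC5 (hasCycleLength_five_of_adj hab hbc hcd hc'd.symm hac'.symm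
    (hd.1 c (by simp)) (hd.1 d (by simp)) (hd'.1 d (by simp)) (hd'.1 c' (by simp)) hne)

end IsGood3Path

lemma ncard_setOf_isGood3Path_lt [Finite V] {t : ℕ} (hC5 : ¬ hasCycleLength G 5)
    (hind : ¬ hasInducedKst G 2 t) (a b d : V) :
    {c | IsGood3Path G a b c d}.ncard < max 3 t := by
  rcases Set.eq_empty_or_nonempty {c | IsGood3Path G a b c d} with hempty | ⟨c, hc⟩
  · rw [hempty, Set.ncard_empty]
    omega
  · calc {c | IsGood3Path G a b c d}.ncard
        ≤ (G.commonNeighbors b d).ncard := Set.ncard_le_ncard fun _ h => h.mem_commonNeighbors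
      _ < max 3 t := ncard_commonNeighbors_lt hC5 hind hc.ne_last hc.2.2.2.2

lemma setOf_isGood3Path_eq_union (x y w : V) :
    {q : V × V × V × V | ((q.1 = x ∧ q.2.1 = y) ∨ (q.1 = y ∧ q.2.1 = x)) ∧ q.2.2.2 = w ∧
      IsGood3Path G q.1 q.2.1 q.2.2.1 q.2.2.2} =
      (fun u => (x, y, u, w)) '' {u | IsGood3Path G x y u w} ∪
        (fun u => (y, x, u, w)) '' {u | IsGood3Path G y x u w} := by
  ext ⟨a, b, c, d⟩
  simp only [Set.mem_ofPred_eq, Set.mem_union, Set.mem_image, Prod.mk.injEq]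
  aesop

end

theorem stmt_12_general {V : Type*} [Fintype V] (G : SimpleGraph V) (t : ℕ)
    (hC5 : ¬ hasCycleLength G 5) (hind : ¬ hasInducedKst G 2 t)
    (x y : V) (w : V) :
    Nat.card {q : V × V × V × V |
      ((q.1 = x ∧ q.2.1 = y) ∨ (q.1 = y ∧ q.2.1 = x)) ∧ q.2.2.2 = w ∧
      [q.1, q.2.1, q.2.2.1, q.2.2.2].Pairwise (· ≠ ·) ∧
      G.Adj q.1 q.2.1 ∧ G.Adj q.2.1 q.2.2.1 ∧ G.Adj q.2.2.1 q.2.2.2 ∧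
      ¬ G.Adj q.2.1 q.2.2.2} ≤ max 3 t - 1 := by
  set A := {u | IsGood3Path G x y u w}
  set B := {u | IsGood3Path G y x u w}
  have hA : A.ncard < max 3 t := ncard_setOf_isGood3Path_lt hC5 hind x y w
  have hB : B.ncard < max 3 t := ncard_setOf_isGood3Path_lt hC5 hind y x w
  have hAB : A.Nonempty → B.Nonempty → A.ncard ≤ 1 ∧ B.ncard ≤ 1 := by
    rintro ⟨a, ha⟩ ⟨b, hb⟩
    refine ⟨(Set.ncard_le_one).mpr fun u hu v hv => ?_, (Set.ncard_le_one).mpr fun u hu v hv => ?_⟩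
    · exact (hu.eq_of_swap hC5 hb).trans (hv.eq_of_swap hC5 hb).symm
    · exact (ha.eq_of_swap hC5 hu).symm.trans (ha.eq_of_swap hC5 hv)
  rw [Nat.card_coe_set_eq]
  calc _ = ((fun u => (x, y, u, w)) '' A ∪ (fun u => (y, x, u, w)) '' B).ncard :=
        congrArg Set.ncard (setOf_isGood3Path_eq_union x y w)
    _ ≤ A.ncard + B.ncard :=
        (Set.ncard_union_le _ _).trans (add_le_add Set.ncard_image_le Set.ncard_image_le)
    _ ≤ max 3 t - 1 := by
      rcases A.eq_empty_or_nonempty with hA0 | hAne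
      · rw [hA0, Set.ncard_empty]; omega
      rcases B.eq_empty_or_nonempty with hB0 | hBne
      · rw [hB0, Set.ncard_empty]; omega
      have := hAB hAne hBne
      omega

theorem stmt_12 {V : Type*} [Fintype V] (G : SimpleGraph V) (t : ℕ) (ht : 2 ≤ t)
    (hC5 : ¬ hasCycleLength G 5) (hind : ¬ hasInducedKst G 2 t)
    (x y : V) (hxy : G.Adj x y) (w : V) (hwx : w ≠ x) (hwy : w ≠ y) :
    Nat.card {q : V × V × V × V |
      ((q.1 = x ∧ q.2.1 = y) ∨ (q.1 = y ∧ q.2.1 = x)) ∧ q.2.2.2 = w ∧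
      [q.1, q.2.1, q.2.2.1, q.2.2.2].Pairwise (· ≠ ·) ∧
      G.Adj q.1 q.2.1 ∧ G.Adj q.2.1 q.2.2.1 ∧ G.Adj q.2.2.1 q.2.2.2 ∧
      ¬ G.Adj q.2.1 q.2.2.2} ≤ max 3 t - 1 :=
  stmt_12_general G t hC5 hind x y w
end

section
/- Let G be a graph on n vertices with no cycle of length 5 and no induced copy of K_{2,t} (t ≥ 2), with minimum degree at least d/2 (d ≥ 6), in which some vertex v has degree greater than 6d. Then n > 2d²/(max(3,t)-1). -/
/-! Let `N` be the neighbourhood of `v` and `D` the set of vertices outside `N ∪ {v}`. A path on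
four vertices inside `N` would close a `C₅` through `v`, so `N` spans at most `|N|` edges. A vertex
of `D` has at most `max 3 t - 1` neighbours in `N`: three common neighbours of two vertices with an
edge among them close a `C₅`, and `t` pairwise non-adjacent ones give an induced `K_{2,t}`.
Summing degrees over `N` gives `|N| d / 2 ≤ 3 |N| + (max 3 t - 1) |D|`, and `n = 1 + |N| + |D|`
with `|N| > 6 d` yields the bound. -/

open Finset

namespace SimpleGraph

variable {V : Type*} (G : SimpleGraph V)

lemma hasCycleLength_five_of_adj_s17 {v x y w z : V}
    (h1 : G.Adj v x) (h2 : G.Adj x y) (h3 : G.Adj y w) (h4 : G.Adj w z) (h5 : G.Adj z v)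
    (hvy : v ≠ y) (hvw : v ≠ w) (hxw : x ≠ w) (hxz : x ≠ z) (hyz : y ≠ z) :
    hasCycleLength G 5 := by
  refine ⟨v, .cons h1 (.cons h2 (.cons h3 (.cons h4 (.cons h5 .nil)))), ?_, rfl⟩
  rw [Walk.cons_isCycle_iff, Walk.isPath_def]
  simp only [Walk.support_cons, Walk.support_nil, Walk.edges_cons, Walk.edges_nil,
    List.nodup_cons, List.mem_cons, Sym2.eq, Sym2.rel_iff']
  grind [Adj.ne]

section CommonNeighbors

variable [Fintype V] [DecidableEq V] [DecidableRel G.Adj] {v w : V}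

lemma not_adj_of_three_le_card_commonNeighbors (hC5 : ¬ hasCycleLength G 5) (hvw : v ≠ w)
    (h3 : 3 ≤ #{u ∈ G.neighborFinset v | G.Adj u w}) :
    ∀ a ∈ {u ∈ G.neighborFinset v | G.Adj u w}, ∀ b ∈ {u ∈ G.neighborFinset v | G.Adj u w},
      ¬ G.Adj a b := by
  intro a ha b hb hab
  obtain ⟨c, hc, hcab⟩ := exists_mem_notMem_of_card_lt_card <|
    (card_le_two (a := a) (b := b)).trans_lt h3
  simp only [mem_filter, mem_neighborFinset] at ha hb hc
  simp only [mem_insert, mem_singleton, not_or] at hcab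
  exact hC5 <| G.hasCycleLength_five_of_adj_s17 ha.1 hab hb.2 hc.2.symm hc.1.symm
    hb.1.ne hvw ha.2.ne (Ne.symm hcab.1) (Ne.symm hcab.2)

lemma card_commonNeighbors_lt_of_not_hasInducedKst {t : ℕ} (hind : ¬ hasInducedKst G 2 t)
    (hvw : v ≠ w) (hnadj : ¬ G.Adj v w)
    (hindep : ∀ a ∈ {u ∈ G.neighborFinset v | G.Adj u w},
      ∀ b ∈ {u ∈ G.neighborFinset v | G.Adj u w}, ¬ G.Adj a b) :
    #{u ∈ G.neighborFinset v | G.Adj u w} < t := by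
  by_contra! ht
  obtain ⟨B, hBS, hB⟩ := exists_subset_card_eq ht
  have hBadj : ∀ b ∈ B, G.Adj v b ∧ G.Adj w b := fun b hb => by
    simpa [G.adj_comm w] using hBS hb
  refine hind ⟨{v, w}, B, ?_, card_pair hvw, hB, ?_, ?_,
    fun b hb b' hb' => hindep b (hBS hb) b' (hBS hb')⟩
  · simp only [disjoint_insert_left, disjoint_singleton_left]
    exact ⟨fun hv => G.irrefl (hBadj v hv).1, fun hw => G.irrefl (hBadj w hw).2⟩
  · simpa [forall_and] using hBadj
  · simp [hnadj, G.adj_comm w v]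

lemma card_commonNeighbors_le (t : ℕ) (hC5 : ¬ hasCycleLength G 5)
    (hind : ¬ hasInducedKst G 2 t) (hvw : v ≠ w) (hnadj : ¬ G.Adj v w) :
    #{u ∈ G.neighborFinset v | G.Adj u w} ≤ max 3 t - 1 := by
  by_contra! h
  have h3 : 3 ≤ #{u ∈ G.neighborFinset v | G.Adj u w} := by omega
  have := G.card_commonNeighbors_lt_of_not_hasInducedKst hind hvw hnadj
    (G.not_adj_of_three_le_card_commonNeighbors hC5 hvw h3)
  omega

end CommonNeighbors

section PathFree

variable [DecidableEq V] [DecidableRel G.Adj] {N : Finset V}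
  (hP4 : ∀ a ∈ N, ∀ b ∈ N, ∀ c ∈ N, ∀ e ∈ N,
    G.Adj a b → G.Adj b c → G.Adj c e → a ≠ c → b ≠ e → a ≠ e → False)
include hP4

lemma card_adj_eq_one_of_three_le {u x : V} (hu : u ∈ N) (h3 : 3 ≤ #{y ∈ N | G.Adj u y})
    (hx : x ∈ N) (hux : G.Adj u x) : #{y ∈ N | G.Adj x y} = 1 := by
  refine le_antisymm ?_ (card_pos.mpr ⟨u, by simp [hu, hux.symm]⟩)
  by_contra! h2
  obtain ⟨y, hy, hyu⟩ := exists_mem_ne h2 u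
  obtain ⟨z, hz, hzxy⟩ := exists_mem_notMem_of_card_lt_card <|
    (card_le_two (a := x) (b := y)).trans_lt h3
  simp only [mem_filter] at hy hz
  simp only [mem_insert, mem_singleton, not_or] at hzxy
  exact hP4 y hy.1 x hx u hu z hz.1 hy.2.symm hux.symm hz.2 hyu (Ne.symm hzxy.1) (Ne.symm hzxy.2)

lemma sum_card_adj_of_three_le_le :
    ∑ u ∈ N with 3 ≤ #{y ∈ N | G.Adj u y}, #{y ∈ N | G.Adj u y} ≤
      #{x ∈ N | #{y ∈ N | G.Adj x y} = 1} := by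
  set L := {x ∈ N | #{y ∈ N | G.Adj x y} = 1}
  calc ∑ u ∈ N with 3 ≤ #{y ∈ N | G.Adj u y}, #{y ∈ N | G.Adj u y}
      = ∑ u ∈ N with 3 ≤ #{y ∈ N | G.Adj u y}, #(L.bipartiteAbove G.Adj u) := by
        refine sum_congr rfl fun u hu => congr_arg card ?_
        rw [mem_filter] at hu
        ext x
        simp only [L, bipartiteAbove, mem_filter]
        exact ⟨fun hx => ⟨⟨hx.1, card_adj_eq_one_of_three_le G hP4 hu.1 hu.2 hx.1 hx.2⟩, hx.2⟩,
          fun hx => ⟨hx.1.1, hx.2⟩⟩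
    _ = ∑ x ∈ L, #({u ∈ N | 3 ≤ #{y ∈ N | G.Adj u y}}.bipartiteBelow G.Adj x) :=
        sum_card_bipartiteAbove_eq_sum_card_bipartiteBelow _
    _ ≤ ∑ x ∈ L, 1 := by
        refine sum_le_sum fun x hx => ?_
        rw [mem_filter] at hx
        refine hx.2 ▸ card_le_card fun u hu => ?_
        simp only [bipartiteBelow, mem_filter] at hu ⊢
        exact ⟨hu.1.1, hu.2.symm⟩
    _ = #L := (card_eq_sum_ones L).symm

-- A vertex of degree at least 3 in `N` is the centre of a star whose leaves have degree 1, so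
-- charging its degree to its leaves leaves every vertex of `N` with weight at most 2.
lemma sum_card_adj_le_two_mul : ∑ u ∈ N, #{y ∈ N | G.Adj u y} ≤ 2 * #N := by
  set f := fun u => #{y ∈ N | G.Adj u y}
  set S := {u ∈ N | ¬ 3 ≤ f u}
  have hleaves : #{x ∈ N | f x = 1} = ∑ u ∈ S, if f u = 1 then 1 else 0 := by
    rw [← card_filter, filter_filter]
    exact congr_arg card (filter_congr fun x _ => by omega)
  calc ∑ u ∈ N, f u = ∑ u ∈ N with 3 ≤ f u, f u + ∑ u ∈ S, f u :=
        (sum_filter_add_sum_filter_not N _ f).symm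
    _ ≤ ∑ u ∈ S, (if f u = 1 then 1 else 0) + ∑ u ∈ S, f u := by
        rw [← hleaves]; gcongr; exact sum_card_adj_of_three_le_le G hP4
    _ ≤ ∑ u ∈ S, 2 := by
        rw [← sum_add_distrib]
        refine sum_le_sum fun u hu => ?_
        rw [mem_filter] at hu
        split_ifs <;> omega
    _ ≤ 2 * #N := by
        rw [sum_const, smul_eq_mul, mul_comm]
        exact Nat.mul_le_mul_left 2 (card_filter_le _ _)

end PathFree

section Neighborhood

variable [Fintype V] [DecidableEq V] [DecidableRel G.Adj]

lemma degree_le_one_add_card_adj (v u : V) :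
    G.degree u ≤ 1 + #{x ∈ G.neighborFinset v | G.Adj u x}
      + #{x ∈ (insert v (G.neighborFinset v))ᶜ | G.Adj u x} := by
  calc G.degree u = #(G.neighborFinset u) := (card_neighborFinset_eq_degree G u).symm
    _ ≤ #(insert v ({x ∈ G.neighborFinset v | G.Adj u x}
          ∪ {x ∈ (insert v (G.neighborFinset v))ᶜ | G.Adj u x})) := by
        refine card_le_card fun x hx => ?_
        rw [mem_neighborFinset] at hx
        by_cases hxv : x = v <;> by_cases hxN : x ∈ G.neighborFinset v <;> simp [*]
    _ ≤ _ := by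
        grw [card_insert_le, card_union_le]
        omega

lemma sum_degree_neighborFinset_le (t : ℕ) (hC5 : ¬ hasCycleLength G 5)
    (hind : ¬ hasInducedKst G 2 t) (v : V) :
    ∑ u ∈ G.neighborFinset v, G.degree u ≤
      3 * G.degree v + (max 3 t - 1) * #(insert v (G.neighborFinset v))ᶜ := by
  set N := G.neighborFinset v
  set D := (insert v N)ᶜ
  have hP4 : ∀ a ∈ N, ∀ b ∈ N, ∀ c ∈ N, ∀ e ∈ N,
      G.Adj a b → G.Adj b c → G.Adj c e → a ≠ c → b ≠ e → a ≠ e → False := by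
    intro a ha b hb c hc e he hab hbc hce hac hbe hae
    rw [mem_neighborFinset] at ha hb hc he
    exact hC5 (G.hasCycleLength_five_of_adj_s17 ha hab hbc hce he.symm hb.ne hc.ne hac hae hbe)
  have hD : ∑ x ∈ D, #(N.bipartiteBelow G.Adj x) ≤ #D * (max 3 t - 1) := by
    refine sum_le_card_nsmul D _ _ fun x hx => ?_
    simp only [D, N, mem_compl, mem_insert, mem_neighborFinset, not_or] at hx
    exact G.card_commonNeighbors_le t hC5 hind (Ne.symm hx.1) hx.2
  calc ∑ u ∈ N, G.degree u
      ≤ ∑ u ∈ N, (1 + #{x ∈ N | G.Adj u x} + #(D.bipartiteAbove G.Adj u)) :=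
        sum_le_sum fun u _ => G.degree_le_one_add_card_adj v u
    _ = #N + ∑ u ∈ N, #{x ∈ N | G.Adj u x} + ∑ x ∈ D, #(N.bipartiteBelow G.Adj x) := by
        rw [sum_add_distrib, sum_add_distrib, sum_card_bipartiteAbove_eq_sum_card_bipartiteBelow,
          card_eq_sum_ones]
    _ ≤ #N + 2 * #N + #D * (max 3 t - 1) := by
        grw [G.sum_card_adj_le_two_mul hP4, hD]
    _ = 3 * G.degree v + (max 3 t - 1) * #D := by
        rw [card_neighborFinset_eq_degree]; ring

end Neighborhood

end SimpleGraph

lemma two_mul_sq_div_lt {d T M D n : ℝ} (hd : 6 ≤ d) (hT : 2 ≤ T) (hM : 6 * d < M)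
    (hdeg : M * (d / 2) ≤ 3 * M + T * D) (hn : 1 + M + D = n) :
    2 * d ^ 2 / T < n := by
  rw [div_lt_iff₀ (by linarith), ← hn]
  nlinarith [mul_pos (by linarith : 0 < M - 6 * d) (by linarith : 0 < d / 2 - 1)]

theorem stmt_17_general {V : Type*} [Fintype V] (G : SimpleGraph V) [DecidableRel G.Adj]
    (t : ℕ) (d : ℝ) (hd : 6 ≤ d)
    (hC5 : ¬ hasCycleLength G 5) (hind : ¬ hasInducedKst G 2 t)
    (hmin : ∀ v, d / 2 ≤ (G.degree v : ℝ))
    (v : V) (hv : 6 * d < (G.degree v : ℝ)) :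
    2 * d ^ 2 / ((max 3 t - 1 : ℕ) : ℝ) < (Fintype.card V : ℝ) := by
  classical
  set D := (insert v (G.neighborFinset v))ᶜ
  have hupper := G.sum_degree_neighborFinset_le t hC5 hind v
  have hlower : (G.degree v : ℝ) * (d / 2) ≤ ∑ u ∈ G.neighborFinset v, (G.degree u : ℝ) := by
    simpa [G.card_neighborFinset_eq_degree] using
      card_nsmul_le_sum (G.neighborFinset v) _ _ fun u _ => hmin u
  have hcard : 1 + G.degree v + #D = Fintype.card V := by
    rw [← card_compl_add_card D, compl_compl, card_insert_of_notMem (by simp),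
      G.card_neighborFinset_eq_degree]
    ring
  refine two_mul_sq_div_lt (D := #D) hd (by norm_cast; omega) hv
    (hlower.trans (by exact_mod_cast hupper)) (by exact_mod_cast hcard)

theorem stmt_17 {V : Type*} [Fintype V] (G : SimpleGraph V) [DecidableRel G.Adj]
    (t : ℕ) (ht : 2 ≤ t) (d : ℝ) (hd : 6 ≤ d)
    (hC5 : ¬ hasCycleLength G 5) (hind : ¬ hasInducedKst G 2 t)
    (hmin : ∀ v, d / 2 ≤ (G.degree v : ℝ))
    (v : V) (hv : 6 * d < (G.degree v : ℝ)) :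
    2 * d ^ 2 / ((max 3 t - 1 : ℕ) : ℝ) < (Fintype.card V : ℝ) :=
  stmt_17_general G t d hd hC5 hind hmin v hv
end
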